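/- The product of an almost periodic sequence with a periodic sequence is almost periodic: if x is almost periodic over A and y is periodic over B, then the sequence (x × y)(i) = (x(i), y(i)) over A × B is almost periodic. -/

import Mathlib

/-- The word `u` occurs in the sequence `x` at position `i`. -/
def occursAt {A : Type*} (x : ℕ → A) (u : List A) (i : ℕ) : Prop :=
  ∀ j : Fin u.length, x (i + (j : ℕ)) = u.get j

/-- A sequence is almost periodic (uniformly recurrent) if every factor
occurs in every sufficiently long window. -/
def AlmostPeriodic {A : Type*} (x : ℕ → A) : Prop :=
  ∀ u : List A, (∃ i, occursAt x u i) →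
    ∃ l : ℕ, ∀ i : ℕ, ∃ j : ℕ, i ≤ j ∧ j + u.length ≤ i + l ∧ occursAt x u j

/-!
Let the first coordinates of a factor `u` of `x × y` occur in `x` at `p`; it suffices to find
occurrences of them in `x` at positions `≡ p [MOD T]` with bounded gaps. Every residue mod `T` of
an offset `s` with an occurrence at `p + s` is realised by some `s ≤ m`, hence inside the factor
`W = x[p, p + m + |u|)`. A recurrence of `W` at `p + d` thus maps this set of residues into
itself under `+ d`; iterating `T - 1` times from the residue `0` yields an occurrence inside that
copy of `W` at a position `≡ p + T d ≡ p`.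
-/

section Occurrences

variable {A : Type*}

theorem occursAt_iff (x : ℕ → A) (u : List A) (i : ℕ) :
    occursAt x u i ↔ ∀ k (hk : k < u.length), x (i + k) = u[k] :=
  ⟨fun h k hk => h ⟨k, hk⟩, fun h k => h k k.isLt⟩

theorem occursAt_ofFn (x : ℕ → A) (p n : ℕ) :
    occursAt x (List.ofFn fun k : Fin n => x (p + k)) p := by
  simp [occursAt_iff]

theorem occursAt.add_of_ofFn {x : ℕ → A} {v : List A} {p q n s : ℕ}
    (hq : occursAt x (List.ofFn fun k : Fin n => x (p + k)) q)
    (hv : occursAt x v (p + s)) (hs : s + v.length ≤ n) : occursAt x v (q + s) := by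
  rw [occursAt_iff] at hq hv ⊢
  intro k hk
  have hqk := hq (s + k) (by simp; omega)
  simp only [List.getElem_ofFn] at hqk
  rw [add_assoc, hqk, ← add_assoc, hv k hk]

theorem occursAt_prod {B : Type*} {x : ℕ → A} {y : ℕ → B} {u : List (A × B)} {i : ℕ} :
    occursAt (fun i => (x i, y i)) u i ↔
      occursAt x (u.map Prod.fst) i ∧ occursAt y (u.map Prod.snd) i := by
  simp only [occursAt_iff, List.length_map, List.getElem_map, Prod.ext_iff, forall_and]

theorem Function.Periodic.occursAt_of_modEq {y : ℕ → A} {T : ℕ} (hy : Function.Periodic y T)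
    {w : List A} {p j : ℕ} (hjp : j ≡ p [MOD T]) (hp : occursAt y w p) : occursAt y w j := by
  rw [occursAt_iff] at hp ⊢
  intro k hk
  rw [← hy.map_mod_nat, Nat.ModEq.add_right k hjp, hy.map_mod_nat, hp k hk]

end Occurrences

theorem Finite.exists_bounded_witnesses {α : Type*} [Finite α] (f : ℕ → α) (P : ℕ → Prop) :
    ∃ m, ∀ s, P s → ∃ s' ≤ m, f s' = f s ∧ P s' := by
  classical
  let g : α → ℕ := fun a => if h : ∃ s, f s = a ∧ P s then h.choose else 0
  obtain ⟨m, hm⟩ := Finite.bddAbove_range g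
  refine ⟨m, fun s hs => ?_⟩
  have h : ∃ s', f s' = f s ∧ P s' := ⟨s, rfl, hs⟩
  have hg : g (f s) = h.choose := dif_pos h
  exact ⟨g (f s), hm ⟨f s, rfl⟩, hg ▸ h.choose_spec⟩

theorem AlmostPeriodic.exists_occursAt_modEq {A : Type*} {x : ℕ → A} (hx : AlmostPeriodic x)
    {v : List A} {p : ℕ} (hp : occursAt x v p) {T : ℕ} (hT : 0 < T) :
    ∃ L, ∀ i, ∃ j, i ≤ j ∧ j + v.length ≤ i + L ∧ j ≡ p [MOD T] ∧ occursAt x v j := by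
  obtain ⟨t, rfl⟩ : ∃ t, T = t + 1 := ⟨T - 1, by omega⟩
  obtain ⟨m, hm⟩ := Finite.exists_bounded_witnesses (fun s : ℕ => (s : ZMod (t + 1)))
    (fun s => occursAt x v (p + s))
  obtain ⟨LW, hLW⟩ := hx _ ⟨p, occursAt_ofFn x p (m + v.length)⟩
  refine ⟨p + LW, fun i => ?_⟩
  obtain ⟨q, hiq, hqLW, hq⟩ := hLW (i + p)
  obtain ⟨d, rfl⟩ : ∃ d, q = p + d := ⟨q - p, by omega⟩
  have hshift : ∀ s, occursAt x v (p + s) →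
      ∃ s' ≤ m, (s' : ZMod (t + 1)) = s ∧ occursAt x v (p + d + s') := by
    intro s hs
    obtain ⟨s', hs'm, hs's, hs'⟩ := hm s hs
    exact ⟨s', hs'm, hs's, hq.add_of_ofFn hs' (by omega)⟩
  have hiter : ∀ k : ℕ, ∃ s : ℕ, (s : ZMod (t + 1)) = k * d ∧ occursAt x v (p + s) := by
    intro k
    induction k with
    | zero => exact ⟨0, by simp, hp⟩
    | succ k ih =>
      obtain ⟨s, hsk, hs⟩ := ih
      obtain ⟨s', -, hs's, hs'⟩ := hshift s hs
      refine ⟨d + s', ?_, by rwa [← add_assoc]⟩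
      push_cast
      rw [hs's, hsk]
      ring
  obtain ⟨s, hst, hs⟩ := hiter t
  obtain ⟨s', hs'm, hs's, hs'⟩ := hshift s hs
  refine ⟨p + d + s', by omega, ?_, ?_, hs'⟩
  · simp only [List.length_ofFn] at hqLW
    omega
  · rw [← ZMod.natCast_eq_natCast_iff]
    have hT0 : ((t + 1 : ℕ) : ZMod (t + 1)) = 0 := ZMod.natCast_self _
    push_cast at hT0 ⊢
    rw [hs's, hst]
    linear_combination (d : ZMod (t + 1)) * hT0

/-- The product of an almost periodic sequence with a periodic sequence is
almost periodic. -/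
theorem almostPeriodic_prod_periodic {A B : Type*}
    (x : ℕ → A) (hx : AlmostPeriodic x)
    (y : ℕ → B) (T : ℕ) (hT : 1 ≤ T) (hy : ∀ i, y (i + T) = y i) :
    AlmostPeriodic (fun i => (x i, y i)) := by
  rintro u ⟨p, hp⟩
  rw [occursAt_prod] at hp
  obtain ⟨L, hL⟩ := hx.exists_occursAt_modEq hp.1 hT
  refine ⟨L, fun i => ?_⟩
  obtain ⟨j, hij, hjL, hjp, hj⟩ := hL i
  rw [List.length_map] at hjL
  exact ⟨j, hij, hjL, occursAt_prod.2 ⟨hj, Function.Periodic.occursAt_of_modEq hy hjp hp.2⟩⟩
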